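/- arXiv:math/0108226 — 10 statements merged into one kernel-verified Lean document; each statement's English description precedes it below -/
import Mathlib

section
/- If A is a Lyapunov stable set for a flow φ and Γ is a transitive set of φ (i.e., Γ is the ω-limit set of some point of Γ) with Γ ∩ A ≠ ∅, then Γ ⊆ A. -/
open Filter Topology Metric Set

variable {M : Type*} [MetricSpace M]

/-- `φ` is a continuous flow on `M`. -/
def IsFlow (φ : ℝ → M → M) : Prop :=
  Continuous (fun p : ℝ × M => φ p.1 p.2) ∧ (∀ x, φ 0 x = x) ∧
    (∀ s t : ℝ, ∀ x, φ (s + t) x = φ s (φ t x))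

/-- The time-reversed flow. -/
def ReverseFlow (φ : ℝ → M → M) : ℝ → M → M := fun t x => φ (-t) x

/-- A compact set `A` is Lyapunov stable for `φ`. -/
def LyapStable (φ : ℝ → M → M) (A : Set M) : Prop :=
  IsCompact A ∧ ∀ U : Set M, IsOpen U → A ⊆ U →
    ∃ V : Set M, IsOpen V ∧ A ⊆ V ∧ ∀ t : ℝ, 0 ≤ t → φ t '' V ⊆ U

/-- The ω-limit set of `x`: accumulation points of `φ t x` as `t → +∞`. -/
def OmegaSet (φ : ℝ → M → M) (x : M) : Set M :=
  {y | ∃ u : ℕ → ℝ, Tendsto u atTop atTop ∧ Tendsto (fun n => φ (u n) x) atTop (𝓝 y)}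

/-- The α-limit set of `x`: accumulation points of `φ t x` as `t → -∞`. -/
def AlphaSet (φ : ℝ → M → M) (x : M) : Set M :=
  {y | ∃ u : ℕ → ℝ, Tendsto u atTop atBot ∧ Tendsto (fun n => φ (u n) x) atTop (𝓝 y)}

/-- The stable set of `Λ`. -/
def StableSet (φ : ℝ → M → M) (Λ : Set M) : Set M :=
  {x | Tendsto (fun t => infDist (φ t x) Λ) atTop (𝓝 0)}

/-- The unstable set of `Λ`. -/
def UnstableSet (φ : ℝ → M → M) (Λ : Set M) : Set M :=
  {x | Tendsto (fun t => infDist (φ t x) Λ) atBot (𝓝 0)}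

/-- `Λ` is invariant under the flow. -/
def IsInvariantSet (φ : ℝ → M → M) (Λ : Set M) : Prop := ∀ t : ℝ, φ t '' Λ = Λ

/-- `Γ` is a transitive set: compact, invariant, and equal to the ω-limit set of
one of its points. -/
def IsTransitiveSet (φ : ℝ → M → M) (Γ : Set M) : Prop :=
  IsCompact Γ ∧ IsInvariantSet φ Γ ∧ ∃ x ∈ Γ, OmegaSet φ x = Γ

/-- `Λ` is neutral: a compact invariant set which is the intersection of a Lyapunov
stable set for `φ` and a Lyapunov stable set for the reversed flow. -/
def IsNeutralSet (φ : ℝ → M → M) (Λ : Set M) : Prop :=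
  IsCompact Λ ∧ IsInvariantSet φ Λ ∧
    ∃ Λp Λm : Set M, LyapStable φ Λp ∧ LyapStable (ReverseFlow φ) Λm ∧ Λ = Λp ∩ Λm

/-- The nonwandering set of the flow. -/
def NonwanderingSet (φ : ℝ → M → M) : Set M :=
  {p | ∀ W : Set M, IsOpen W → p ∈ W → ∀ T : ℝ, 0 < T → ∃ t > T, (φ t '' W ∩ W).Nonempty}

/-- `Λ` is isolated: the maximal invariant set of some compact neighborhood. -/
def IsIsolatedSet (φ : ℝ → M → M) (Λ : Set M) : Prop :=
  ∃ U : Set M, IsCompact U ∧ Λ ⊆ interior U ∧ (⋂ t : ℝ, φ t '' U) = Λ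

/-- `Λ` is Ω-isolated: `Ω(φ) \ Λ` is closed. -/
def IsOmegaIsolatedSet (φ : ℝ → M → M) (Λ : Set M) : Prop :=
  IsClosed (NonwanderingSet φ \ Λ)


theorem transitive_subset_of_lyapunov_stable [CompactSpace M] (φ : ℝ → M → M)
    (hφ : IsFlow φ) (A : Set M) (hLS : LyapStable φ A)
    (Γ : Set M) (hΓ : IsTransitiveSet φ Γ) (hmeet : (Γ ∩ A).Nonempty) :
    Γ ⊆ A := by
  obtain ⟨hAcomp, hstab⟩ := hLS
  obtain ⟨hΓcomp, hinv, x, hxΓ, hω⟩ := hΓ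
  obtain ⟨z, hzΓ, hzA⟩ := hmeet
  intro y hyΓ
  by_contra hyA
  have hAne : A.Nonempty := ⟨z, hzA⟩
  have hε : 0 < infDist y A :=
    (hAcomp.isClosed.notMem_iff_infDist_pos hAne).mp hyA
  set ε := infDist y A with hεdef
  obtain ⟨V, hVopen, hAV, hV⟩ := hstab (thickening (ε/2) A) isOpen_thickening
    (self_subset_thickening (by positivity) A)
  rw [← hω] at hzΓ hyΓ
  obtain ⟨u, hu, hux⟩ := hzΓ
  obtain ⟨v, hv, hvx⟩ := hyΓ
  have h1 : ∀ᶠ n in atTop, φ (u n) x ∈ V := hux (hVopen.mem_nhds (hAV hzA))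
  obtain ⟨N, hN⟩ := h1.exists
  have h2 : ∀ᶠ n in atTop, u N ≤ v n := hv.eventually_ge_atTop (u N)
  have h3 : ∀ᶠ n in atTop, φ (v n) x ∈ {p : M | infDist p A ≤ ε/2} := by
    filter_upwards [h2] with n hn
    have heq : φ (v n) x = φ (v n - u N) (φ (u N) x) := by
      rw [← hφ.2.2, sub_add_cancel]
    have : φ (v n) x ∈ thickening (ε/2) A := by
      rw [heq]; exact hV (v n - u N) (by linarith) ⟨φ (u N) x, hN, rfl⟩
    exact le_of_lt ((mem_thickening_iff_infDist_lt hAne).mp this)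
  have hcl : IsClosed {p : M | infDist p A ≤ ε/2} :=
    isClosed_le (continuous_infDist_pt A) continuous_const
  have : infDist y A ≤ ε/2 := hcl.mem_of_tendsto hvx h3
  linarith
end

section
/- A neutral set Λ = Λ⁺ ∩ Λ⁻ of a flow φ is saturated: W^s(Λ) ∩ W^u(Λ) = Λ, where W^s(Λ) (resp. W^u(Λ)) is the set of points x with dist(φ(t,x), Λ) → 0 as t → +∞ (resp. t → −∞). -/
open Filter Topology Metric Set

variable {M : Type*} [MetricSpace M]

theorem neutral_set_saturated [CompactSpace M] (φ : ℝ → M → M) (hφ : IsFlow φ)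
    (Λ : Set M) (hne : Λ.Nonempty) (hΛ : IsNeutralSet φ Λ) :
    StableSet φ Λ ∩ UnstableSet φ Λ = Λ := by
  obtain ⟨hcomp, hinv, Λp, Λm, ⟨hpc, hps⟩, ⟨hmc, hms⟩, hsplit⟩ := hΛ
  obtain ⟨hcont, hzero, hadd⟩ := hφ
  have hflip : ∀ t : ℝ, ∀ y : M, φ (-t) (φ t y) = y := by
    intro t y
    rw [← hadd, neg_add_cancel, hzero]
  apply Subset.antisymm
  · rintro x ⟨hs, hu⟩
    have hnear : ∀ (l : Filter ℝ) (V : Set M), IsOpen V → Λ ⊆ V →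
        Tendsto (fun t => infDist (φ t x) Λ) l (𝓝 0) → ∀ᶠ t in l, φ t x ∈ V := by
      intro l V hV hΛV htd
      obtain ⟨δ, hδ, hth⟩ := hcomp.exists_thickening_subset_open hV hΛV
      filter_upwards [htd (Iio_mem_nhds hδ : Iio δ ∈ 𝓝 (0:ℝ))] with t ht
      exact hth ((mem_thickening_iff_infDist_lt hne).mpr ht)
    have hxp : x ∈ Λp := by
      by_contra hx
      obtain ⟨V, hVopen, hΛpV, hVstab⟩ := hps {x}ᶜ isOpen_compl_singleton
        (fun y hy hxy => hx (hxy ▸ hy))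
      have hΛV : Λ ⊆ V := fun y hy => hΛpV (hsplit ▸ hy).1
      obtain ⟨t₀, ht₀le, ht₀⟩ := ((hnear atBot V hVopen hΛV hu).and
        (eventually_le_atBot (0:ℝ))).exists
      exact hVstab (-t₀) (by linarith) ⟨φ t₀ x, ht₀le, hflip t₀ x⟩ rfl
    have hxm : x ∈ Λm := by
      by_contra hx
      obtain ⟨V, hVopen, hΛmV, hVstab⟩ := hms {x}ᶜ isOpen_compl_singleton
        (fun y hy hxy => hx (hxy ▸ hy))
      have hΛV : Λ ⊆ V := fun y hy => hΛmV (hsplit ▸ hy).2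
      obtain ⟨t₀, ht₀le, ht₀⟩ := ((hnear atTop V hVopen hΛV hs).and
        (eventually_ge_atTop (0:ℝ))).exists
      exact hVstab t₀ ht₀ ⟨φ t₀ x, ht₀le, hflip t₀ x⟩ rfl
    exact hsplit ▸ ⟨hxp, hxm⟩
  · intro x hx
    have hmem : ∀ t : ℝ, φ t x ∈ Λ := fun t => (hinv t) ▸ mem_image_of_mem _ hx
    have heq : (fun t => infDist (φ t x) Λ) = fun _ => 0 := by
      funext t; exact infDist_zero_of_mem (hmem t)
    constructor <;> · show Tendsto _ _ _; rw [heq]; exact tendsto_const_nhds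
end

section
/- If a neutral set Λ of a flow φ is transitive, then Λ is maximal transitive: every transitive set Γ of φ with Γ ∩ Λ ≠ ∅ satisfies Γ ⊆ Λ. -/
open Filter Topology Metric Set

variable {M : Type*} [MetricSpace M]

/-- If some point of `ω(x)` lies in a forward-Lyapunov-stable set `Λp`,
then the whole ω-limit set is contained in `Λp`. -/
lemma omega_subset_of_lyapStable (φ : ℝ → M → M) (hφ : IsFlow φ) {x z : M}
    {Λp : Set M} (hst : LyapStable φ Λp) (hz : z ∈ OmegaSet φ x)
    (hzp : z ∈ Λp) : OmegaSet φ x ⊆ Λp := by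
  intro p hp
  by_contra hpn
  have hne : Λp.Nonempty := ⟨z, hzp⟩
  have hcl : IsClosed Λp := hst.1.isClosed
  have hd : 0 < infDist p Λp := (hcl.notMem_iff_infDist_pos hne).1 hpn
  set d := infDist p Λp with hd_def
  set U := Metric.thickening (d / 2) Λp with hU
  have hUopen : IsOpen U := Metric.isOpen_thickening
  have hΛU : Λp ⊆ U := Metric.self_subset_thickening (by linarith) Λp
  obtain ⟨V, hVopen, hΛV, hV⟩ := hst.2 U hUopen hΛU
  obtain ⟨u, hu, huz⟩ := hz
  have hzV : z ∈ V := hΛV hzp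
  obtain ⟨N, hN⟩ := (huz.eventually (hVopen.mem_nhds hzV)).exists
  -- all times ≥ u N land in U
  have hforward : ∀ r : ℝ, u N ≤ r → φ r x ∈ U := by
    intro r hr
    have : φ (r - u N) (φ (u N) x) ∈ U :=
      hV (r - u N) (by linarith) ⟨φ (u N) x, hN, rfl⟩
    rwa [← hφ.2.2, sub_add_cancel] at this
  obtain ⟨v, hv, hvp⟩ := hp
  -- the set {y | infDist y Λp ≤ d/2} is closed and contains U
  have hset : IsClosed {y : M | infDist y Λp ≤ d / 2} :=
    isClosed_le (continuous_infDist_pt Λp) continuous_const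
  have hUsub : U ⊆ {y : M | infDist y Λp ≤ d / 2} := by
    intro y hy
    exact ((Metric.mem_thickening_iff_infDist_lt hne).1 hy).le
  have hple : infDist p Λp ≤ d / 2 := by
    refine hset.mem_of_tendsto hvp ?_
    have hev : ∀ᶠ n in atTop, u N ≤ v n := hv.eventually_ge_atTop (u N)
    filter_upwards [hev] with n hn
    exact hUsub (hforward (v n) hn)
  linarith

/-- If some point of `ω(x)` lies in a backward-Lyapunov-stable set `Λm`,
then the whole ω-limit set is contained in `Λm`. -/
lemma omega_subset_of_lyapStable_rev (φ : ℝ → M → M) (hφ : IsFlow φ) {x z : M}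
    {Λm : Set M} (hst : LyapStable (ReverseFlow φ) Λm) (hz : z ∈ OmegaSet φ x)
    (hzm : z ∈ Λm) : OmegaSet φ x ⊆ Λm := by
  intro p hp
  by_contra hpn
  have hne : Λm.Nonempty := ⟨z, hzm⟩
  have hcl : IsClosed Λm := hst.1.isClosed
  have hd : 0 < infDist p Λm := (hcl.notMem_iff_infDist_pos hne).1 hpn
  set d := infDist p Λm with hd_def
  set U := Metric.thickening (d / 2) Λm with hU
  have hUopen : IsOpen U := Metric.isOpen_thickening
  have hΛU : Λm ⊆ U := Metric.self_subset_thickening (by linarith) Λm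
  obtain ⟨V, hVopen, hΛV, hV⟩ := hst.2 U hUopen hΛU
  obtain ⟨u, hu, huz⟩ := hz
  have hzV : z ∈ V := hΛV hzm
  obtain ⟨v, hv, hvp⟩ := hp
  -- every φ (v n) x lies in U
  have hall : ∀ n : ℕ, φ (v n) x ∈ U := by
    intro n
    have h1 : ∀ᶠ m in atTop, v n ≤ u m := hu.eventually_ge_atTop (v n)
    have h2 : ∀ᶠ m in atTop, φ (u m) x ∈ V := huz.eventually (hVopen.mem_nhds hzV)
    obtain ⟨m, hm1, hm2⟩ := (h1.and h2).exists
    have : ReverseFlow φ (u m - v n) (φ (u m) x) ∈ U :=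
      hV (u m - v n) (by linarith) ⟨φ (u m) x, hm2, rfl⟩
    have heq : ReverseFlow φ (u m - v n) (φ (u m) x) = φ (v n) x := by
      show φ (-(u m - v n)) (φ (u m) x) = φ (v n) x
      rw [← hφ.2.2]
      ring_nf
    rwa [heq] at this
  have hset : IsClosed {y : M | infDist y Λm ≤ d / 2} :=
    isClosed_le (continuous_infDist_pt Λm) continuous_const
  have hUsub : U ⊆ {y : M | infDist y Λm ≤ d / 2} := by
    intro y hy
    exact ((Metric.mem_thickening_iff_infDist_lt hne).1 hy).le
  have hple : infDist p Λm ≤ d / 2 :=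
    hset.mem_of_tendsto hvp (Eventually.of_forall fun n => hUsub (hall n))
  linarith

theorem neutral_transitive_maximal [CompactSpace M] (φ : ℝ → M → M) (hφ : IsFlow φ)
    (Λ : Set M) (hΛ : IsNeutralSet φ Λ) (htrans : IsTransitiveSet φ Λ) :
    ∀ Γ : Set M, IsTransitiveSet φ Γ → (Γ ∩ Λ).Nonempty → Γ ⊆ Λ := by
  obtain ⟨hΛc, hΛinv, Λp, Λm, hstp, hstm, hΛeq⟩ := hΛ
  intro Γ hΓ hΓΛ
  obtain ⟨hΓc, hΓinv, x, hxΓ, hωx⟩ := hΓ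
  obtain ⟨z, hzΓ, hzΛ⟩ := hΓΛ
  have hzp : z ∈ Λp := (hΛeq ▸ hzΛ).1
  have hzm : z ∈ Λm := (hΛeq ▸ hzΛ).2
  have hzω : z ∈ OmegaSet φ x := hωx ▸ hzΓ
  have h1 : Γ ⊆ Λp := hωx ▸ omega_subset_of_lyapStable φ hφ hstp hzω hzp
  have h2 : Γ ⊆ Λm := hωx ▸ omega_subset_of_lyapStable_rev φ hφ hstm hzω hzm
  rw [hΛeq]
  exact subset_inter h1 h2
end

section
/- Two distinct transitive neutral sets of a flow φ are disjoint. -/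
open Filter Topology Metric Set

variable {M : Type*} [MetricSpace M]

lemma omega_subset_of_neutral (φ : ℝ → M → M) (hφ : IsFlow φ)
    {x z : M} {Λp Λm : Set M}
    (hp : LyapStable φ Λp) (hm : LyapStable (ReverseFlow φ) Λm)
    (hzω : z ∈ OmegaSet φ x) (hzp : z ∈ Λp) (hzm : z ∈ Λm) :
    OmegaSet φ x ⊆ Λp ∩ Λm := by
  obtain ⟨u, hu, huc⟩ := hzω
  intro y hy
  obtain ⟨v, hv, hvc⟩ := hy
  constructor
  · -- y ∈ Λp
    rw [hp.1.isClosed.mem_iff_infDist_zero ⟨z, hzp⟩]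
    refine le_antisymm ?_ infDist_nonneg
    have key : ∀ ε > (0 : ℝ), infDist y Λp ≤ ε := by
      intro ε hε
      set U := {w : M | infDist w Λp < ε} with hU
      have hUopen : IsOpen U := isOpen_lt (continuous_infDist_pt Λp) continuous_const
      have hsub : Λp ⊆ U := fun w hw => by
        simp only [hU, Set.mem_setOf_eq, infDist_zero_of_mem hw]; exact hε
      obtain ⟨V, hVo, hΛV, hV⟩ := hp.2 U hUopen hsub
      have h1 : ∀ᶠ n in atTop, φ (u n) x ∈ V :=
        huc.eventually_mem (hVo.mem_nhds (hΛV hzp))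
      obtain ⟨n₀, hn₀⟩ := h1.exists
      have hEv : ∀ᶠ n in atTop, infDist (φ (v n) x) Λp < ε := by
        filter_upwards [hv.eventually_ge_atTop (u n₀)] with n hn
        have hmem : φ (v n - u n₀) (φ (u n₀) x) ∈ U :=
          hV (v n - u n₀) (by linarith) (Set.mem_image_of_mem _ hn₀)
        have heq : φ (v n) x = φ (v n - u n₀) (φ (u n₀) x) := by
          rw [← hφ.2.2]; congr 1; ring
        rw [heq]; exact hmem
      have hlim : Tendsto (fun n => infDist (φ (v n) x) Λp) atTop (𝓝 (infDist y Λp)) :=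
        ((continuous_infDist_pt Λp).tendsto y).comp hvc
      exact le_of_tendsto hlim (hEv.mono fun n h => h.le)
    exact le_of_forall_pos_le_add fun ε hε => by simpa using key ε hε
  · -- y ∈ Λm
    by_contra hy'
    have hne : Λm.Nonempty := ⟨z, hzm⟩
    have hεpos : 0 < infDist y Λm := by
      rcases infDist_nonneg.lt_or_eq (a := (0:ℝ)) (b := infDist y Λm) with h | h
      · exact h
      · exact absurd ((hm.1.isClosed.mem_iff_infDist_zero hne).mpr h.symm) hy'
    set ε := infDist y Λm with hεdef
    set U := {w : M | infDist w Λm < ε / 2} with hU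
    have hUopen : IsOpen U := isOpen_lt (continuous_infDist_pt Λm) continuous_const
    have hsub : Λm ⊆ U := fun w hw => by
      simp only [hU, Set.mem_setOf_eq, infDist_zero_of_mem hw]; positivity
    obtain ⟨V, hVo, hΛV, hV⟩ := hm.2 U hUopen hsub
    have h1 : ∀ᶠ n in atTop, φ (u n) x ∈ V :=
      huc.eventually_mem (hVo.mem_nhds (hΛV hzm))
    have h2 : ∀ᶠ n in atTop, φ (v n) x ∈ Metric.ball y (ε / 2) :=
      hvc.eventually_mem (Metric.ball_mem_nhds y (by positivity))
    obtain ⟨n₁, hn₁⟩ := h2.exists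
    obtain ⟨n₂, hn₂V, hn₂t⟩ := (h1.and (hu.eventually_ge_atTop (v n₁))).exists
    have hmem : ReverseFlow φ (u n₂ - v n₁) (φ (u n₂) x) ∈ U :=
      hV (u n₂ - v n₁) (by linarith) (Set.mem_image_of_mem _ hn₂V)
    have heq : ReverseFlow φ (u n₂ - v n₁) (φ (u n₂) x) = φ (v n₁) x := by
      show φ (-(u n₂ - v n₁)) (φ (u n₂) x) = φ (v n₁) x
      rw [← hφ.2.2]; congr 1; ring
    rw [heq] at hmem
    have htri : infDist y Λm ≤ infDist (φ (v n₁) x) Λm + dist y (φ (v n₁) x) :=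
      infDist_le_infDist_add_dist
    have hd : dist y (φ (v n₁) x) < ε / 2 := by
      rw [dist_comm]; exact Metric.mem_ball.mp hn₁
    have hm2 : infDist (φ (v n₁) x) Λm < ε / 2 := hmem
    have : ε < ε := by calc ε = infDist y Λm := hεdef
                          _ ≤ _ := htri
                          _ < ε / 2 + ε / 2 := by linarith
                          _ = ε := by ring
    exact lt_irrefl _ this


theorem transitive_neutral_disjoint_or_eq [CompactSpace M] (φ : ℝ → M → M)
    (hφ : IsFlow φ) (Λ₁ Λ₂ : Set M)
    (h1 : IsNeutralSet φ Λ₁) (h1t : IsTransitiveSet φ Λ₁)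
    (h2 : IsNeutralSet φ Λ₂) (h2t : IsTransitiveSet φ Λ₂)
    (hmeet : (Λ₁ ∩ Λ₂).Nonempty) :
    Λ₁ = Λ₂ := by
  obtain ⟨x₁, hx₁, hω₁⟩ := h1t.2.2
  obtain ⟨x₂, hx₂, hω₂⟩ := h2t.2.2
  obtain ⟨Λp₁, Λm₁, hp₁, hm₁, heq₁⟩ := h1.2.2
  obtain ⟨Λp₂, Λm₂, hp₂, hm₂, heq₂⟩ := h2.2.2
  obtain ⟨z, hz₁, hz₂⟩ := hmeet
  have hz₂' : z ∈ Λp₂ ∩ Λm₂ := heq₂ ▸ hz₂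
  have hz₁' : z ∈ Λp₁ ∩ Λm₁ := heq₁ ▸ hz₁
  apply Set.Subset.antisymm
  · have := omega_subset_of_neutral φ hφ hp₂ hm₂ (hω₁ ▸ hz₁) hz₂'.1 hz₂'.2
    rw [hω₁, ← heq₂] at this
    exact this
  · have := omega_subset_of_neutral φ hφ hp₁ hm₁ (hω₂ ▸ hz₂) hz₁'.1 hz₁'.2
    rw [hω₂, ← heq₁] at this
    exact this
end

section
/- There is no cycle of a flow φ formed by transitive neutral sets: there do not exist disjoint transitive neutral sets Λ₀, …, Λ_{n−1} (with Λ_n := Λ₀, n ≥ 1) such that for each i, (W^u(Λ_i) \ Λ_i) ∩ (W^s(Λ_{i+1}) \ Λ_{i+1}) ≠ ∅. -/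
open Filter Topology Metric Set

variable {M : Type*} [MetricSpace M]

section NoCycleAux

variable {φ : ℝ → M → M}

lemma flow_add (hφ : IsFlow φ) (s t : ℝ) (x : M) : φ s (φ t x) = φ (s + t) x :=
  (hφ.2.2 s t x).symm

/-- If `A` is Lyapunov stable and the orbit of `x` enters every neighborhood of `A`
at arbitrarily negative times, then the whole orbit of `x` lies in `A`. -/
lemma absorb_forward (hφ : IsFlow φ) {A : Set M} (hA : LyapStable φ A) (hAne : A.Nonempty)
    {x : M} (H : ∀ V : Set M, IsOpen V → A ⊆ V → ∀ T : ℝ, ∃ t ≤ T, φ t x ∈ V) :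
    ∀ s : ℝ, φ s x ∈ A := by
  intro s
  have hcl : IsClosed A := hA.1.isClosed
  rw [hcl.mem_iff_infDist_zero hAne]
  refine le_antisymm ?_ infDist_nonneg
  by_contra h
  push_neg at h
  obtain ⟨V, hVo, hAV, hV⟩ := hA.2 (thickening (infDist (φ s x) A) A) isOpen_thickening
    (self_subset_thickening h A)
  obtain ⟨t, ht, htV⟩ := H V hVo hAV s
  have hmem : φ s x ∈ thickening (infDist (φ s x) A) A :=
    hV (s - t) (by linarith) ⟨φ t x, htV, by rw [flow_add hφ]; congr 1; ring⟩
  exact absurd ((mem_thickening_iff_infDist_lt hAne).1 hmem) (lt_irrefl _)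

/-- If `A` is Lyapunov stable for the reversed flow and the orbit of `x` enters every
neighborhood of `A` at arbitrarily large times, then the whole orbit of `x` lies in `A`. -/
lemma absorb_reverse (hφ : IsFlow φ) {A : Set M} (hA : LyapStable (ReverseFlow φ) A)
    (hAne : A.Nonempty) {x : M}
    (H : ∀ V : Set M, IsOpen V → A ⊆ V → ∀ T : ℝ, ∃ t, T ≤ t ∧ φ t x ∈ V) :
    ∀ s : ℝ, φ s x ∈ A := by
  intro s
  have hcl : IsClosed A := hA.1.isClosed
  rw [hcl.mem_iff_infDist_zero hAne]
  refine le_antisymm ?_ infDist_nonneg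
  by_contra h
  push_neg at h
  obtain ⟨V, hVo, hAV, hV⟩ := hA.2 (thickening (infDist (φ s x) A) A) isOpen_thickening
    (self_subset_thickening h A)
  obtain ⟨t, ht, htV⟩ := H V hVo hAV s
  have hmem : φ s x ∈ thickening (infDist (φ s x) A) A :=
    hV (t - s) (by linarith) ⟨φ t x, htV, by
      show φ (-(t - s)) (φ t x) = φ s x
      rw [flow_add hφ]; congr 1; ring⟩
  exact absurd ((mem_thickening_iff_infDist_lt hAne).1 hmem) (lt_irrefl _)

/-- If `A` is Lyapunov stable and the orbit of `z` enters every neighborhood of `A`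
at arbitrarily large times, then the ω-limit set of `z` lies in `A`. -/
lemma omega_subset_of_forward_entries (hφ : IsFlow φ) {A : Set M} (hA : LyapStable φ A)
    (hAne : A.Nonempty) {z : M}
    (H : ∀ V : Set M, IsOpen V → A ⊆ V → ∀ T : ℝ, ∃ t, T ≤ t ∧ φ t z ∈ V) :
    OmegaSet φ z ⊆ A := by
  rintro y ⟨u, hu, huy⟩
  have hcl : IsClosed A := hA.1.isClosed
  rw [hcl.mem_iff_infDist_zero hAne]
  refine le_antisymm ?_ infDist_nonneg
  by_contra hpos
  push_neg at hpos
  have key : infDist y A ≤ infDist y A / 2 := by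
    set ε := infDist y A / 2 with hεdef
    have hε : 0 < ε := by positivity
    obtain ⟨V, hVo, hAV, hV⟩ := hA.2 (thickening ε A) isOpen_thickening
      (self_subset_thickening hε A)
    obtain ⟨t, -, htV⟩ := H V hVo hAV 0
    have hforward : ∀ s, t ≤ s → infDist (φ s z) A < ε := by
      intro s hs
      exact (mem_thickening_iff_infDist_lt hAne).1
        (hV (s - t) (by linarith) ⟨φ t z, htV, by rw [flow_add hφ]; congr 1; ring⟩)
    have h1 : Tendsto (fun m => infDist (φ (u m) z) A) atTop (𝓝 (infDist y A)) :=
      ((continuous_infDist_pt A).tendsto y).comp huy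
    have h2 : ∀ᶠ m in atTop, infDist (φ (u m) z) A ≤ ε := by
      filter_upwards [hu.eventually_ge_atTop t] with m hm using (hforward _ hm).le
    exact le_of_tendsto h1 h2
  linarith

lemma omega_subset_closed {A : Set M} (hA : IsClosed A) {x : M} (h : ∀ s, φ s x ∈ A) :
    OmegaSet φ x ⊆ A := by
  rintro y ⟨u, -, huy⟩
  exact hA.mem_of_tendsto huy (Filter.Eventually.of_forall fun n => h (u n))

lemma alpha_subset_closed {A : Set M} (hA : IsClosed A) {x : M} (h : ∀ s, φ s x ∈ A) :
    AlphaSet φ x ⊆ A := by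
  rintro y ⟨u, -, huy⟩
  exact hA.mem_of_tendsto huy (Filter.Eventually.of_forall fun n => h (u n))

lemma omega_nonempty [CompactSpace M] (x : M) : (OmegaSet φ x).Nonempty := by
  obtain ⟨a, -, ψ, hψ, hconv⟩ :=
    isCompact_univ.tendsto_subseq (x := fun n : ℕ => φ (n : ℝ) x) fun n => mem_univ _
  exact ⟨a, fun m => ((ψ m : ℕ) : ℝ), tendsto_natCast_atTop_atTop.comp hψ.tendsto_atTop, hconv⟩

lemma alpha_nonempty [CompactSpace M] (x : M) : (AlphaSet φ x).Nonempty := by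
  obtain ⟨a, -, ψ, hψ, hconv⟩ :=
    isCompact_univ.tendsto_subseq (x := fun n : ℕ => φ (-(n : ℝ)) x) fun n => mem_univ _
  exact ⟨a, fun m => -((ψ m : ℕ) : ℝ),
    tendsto_neg_atTop_atBot.comp (tendsto_natCast_atTop_atTop.comp hψ.tendsto_atTop), hconv⟩

lemma omega_subset_of_stable {Λ : Set M} (hcl : IsClosed Λ) (hne : Λ.Nonempty) {x : M}
    (hx : x ∈ StableSet φ Λ) : OmegaSet φ x ⊆ Λ := by
  rintro y ⟨u, hu, huy⟩
  rw [hcl.mem_iff_infDist_zero hne]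
  have h1 : Tendsto (fun m => infDist (φ (u m) x) Λ) atTop (𝓝 (infDist y Λ)) :=
    ((continuous_infDist_pt Λ).tendsto y).comp huy
  have h2 : Tendsto (fun m => infDist (φ (u m) x) Λ) atTop (𝓝 0) := hx.comp hu
  exact tendsto_nhds_unique h1 h2

lemma alpha_subset_of_unstable {Λ : Set M} (hcl : IsClosed Λ) (hne : Λ.Nonempty) {x : M}
    (hx : x ∈ UnstableSet φ Λ) : AlphaSet φ x ⊆ Λ := by
  rintro y ⟨u, hu, huy⟩
  rw [hcl.mem_iff_infDist_zero hne]
  have h1 : Tendsto (fun m => infDist (φ (u m) x) Λ) atTop (𝓝 (infDist y Λ)) :=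
    ((continuous_infDist_pt Λ).tendsto y).comp huy
  have h2 : Tendsto (fun m => infDist (φ (u m) x) Λ) atTop (𝓝 0) := hx.comp hu
  exact tendsto_nhds_unique h1 h2

lemma unstable_entries {Λ A : Set M} {x : M} (hx : x ∈ UnstableSet φ Λ) (hΛ : IsCompact Λ)
    (hΛne : Λ.Nonempty) (hsub : Λ ⊆ A) :
    ∀ V : Set M, IsOpen V → A ⊆ V → ∀ T : ℝ, ∃ t ≤ T, φ t x ∈ V := by
  intro V hVo hAV T
  obtain ⟨δ, hδ, hth⟩ := hΛ.exists_thickening_subset_open hVo (hsub.trans hAV)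
  obtain ⟨a, ha⟩ := eventually_atBot.1 (hx (Iio_mem_nhds hδ))
  exact ⟨min a T, min_le_right _ _,
    hth ((mem_thickening_iff_infDist_lt hΛne).2 (ha _ (min_le_left _ _)))⟩

lemma stable_entries {Λ A : Set M} {x : M} (hx : x ∈ StableSet φ Λ) (hΛ : IsCompact Λ)
    (hΛne : Λ.Nonempty) (hsub : Λ ⊆ A) :
    ∀ V : Set M, IsOpen V → A ⊆ V → ∀ T : ℝ, ∃ t, T ≤ t ∧ φ t x ∈ V := by
  intro V hVo hAV T
  obtain ⟨δ, hδ, hth⟩ := hΛ.exists_thickening_subset_open hVo (hsub.trans hAV)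
  obtain ⟨a, ha⟩ := eventually_atTop.1 (hx (Iio_mem_nhds hδ))
  exact ⟨max a T, le_max_right _ _,
    hth ((mem_thickening_iff_infDist_lt hΛne).2 (ha _ (le_max_left _ _)))⟩

lemma trans_subset_forward (hφ : IsFlow φ) {A Γ : Set M} (hA : LyapStable φ A)
    (hAne : A.Nonempty) (hΓ : IsTransitiveSet φ Γ) {p : M} (hp : p ∈ Γ) (hpA : p ∈ A) :
    Γ ⊆ A := by
  obtain ⟨-, -, z, -, hz⟩ := hΓ
  rw [← hz]
  apply omega_subset_of_forward_entries hφ hA hAne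
  intro V hVo hAV T
  obtain ⟨u, hu, hup⟩ : p ∈ OmegaSet φ z := hz.symm ▸ hp
  obtain ⟨m, hm1, hm2⟩ := ((hup.eventually (hVo.mem_nhds (hAV hpA))).and
    (hu.eventually_ge_atTop T)).exists
  exact ⟨u m, hm2, hm1⟩

lemma trans_subset_reverse (hφ : IsFlow φ) {A Γ : Set M} (hA : LyapStable (ReverseFlow φ) A)
    (hAne : A.Nonempty) (hΓ : IsTransitiveSet φ Γ) {p : M} (hp : p ∈ Γ) (hpA : p ∈ A) :
    Γ ⊆ A := by
  obtain ⟨-, -, z, -, hz⟩ := hΓ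
  have horb : ∀ s, φ s z ∈ A := by
    apply absorb_reverse hφ hA hAne
    intro V hVo hAV T
    obtain ⟨u, hu, hup⟩ : p ∈ OmegaSet φ z := hz.symm ▸ hp
    obtain ⟨m, hm1, hm2⟩ := ((hup.eventually (hVo.mem_nhds (hAV hpA))).and
      (hu.eventually_ge_atTop T)).exists
    exact ⟨u m, hm2, hm1⟩
  rw [← hz]
  exact omega_subset_closed hA.1.isClosed horb

end NoCycleAux

theorem no_cycle_of_transitive_neutral_sets [CompactSpace M] (φ : ℝ → M → M)
    (hφ : IsFlow φ) (n : ℕ) (hn : 1 ≤ n) (Λ : ℕ → Set M)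
    (hneutral : ∀ i < n, IsNeutralSet φ (Λ i))
    (htrans : ∀ i < n, IsTransitiveSet φ (Λ i))
    (hdisj : ∀ i < n, ∀ j < n, i ≠ j → Disjoint (Λ i) (Λ j))
    (hper : Λ n = Λ 0)
    (hcycle : ∀ i < n,
      ((UnstableSet φ (Λ i) \ Λ i) ∩ (StableSet φ (Λ (i + 1)) \ Λ (i + 1))).Nonempty) :
    False := by
  have h0 : 0 < n := hn
  obtain ⟨-, -, Λp, Λm, hΛp, hΛm, hΛ0⟩ := hneutral 0 h0
  have ht' : ∀ k, k ≤ n → IsTransitiveSet φ (Λ k) := by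
    intro k hk
    rcases lt_or_eq_of_le hk with h | h
    · exact htrans k h
    · rw [h, hper]; exact htrans 0 h0
  have hne : ∀ k, k ≤ n → (Λ k).Nonempty := by
    intro k hk; obtain ⟨x, hx, -⟩ := (ht' k hk).2.2; exact ⟨x, hx⟩
  have hcpt : ∀ k, k ≤ n → IsCompact (Λ k) := fun k hk => (ht' k hk).1
  have hΛ0p : Λ 0 ⊆ Λp := by rw [hΛ0]; exact inter_subset_left
  have hΛ0m : Λ 0 ⊆ Λm := by rw [hΛ0]; exact inter_subset_right
  have hpne : Λp.Nonempty := (hne 0 h0.le).mono hΛ0p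
  have hmne : Λm.Nonempty := (hne 0 h0.le).mono hΛ0m
  have stepF : ∀ i, i < n → Λ i ⊆ Λp → Λ (i + 1) ⊆ Λp := by
    intro i hi hsub
    obtain ⟨x, ⟨hxu, -⟩, hxs, -⟩ := hcycle i hi
    have horb : ∀ s, φ s x ∈ Λp :=
      absorb_forward hφ hΛp hpne (unstable_entries hxu (hcpt i hi.le) (hne i hi.le) hsub)
    obtain ⟨p, hp⟩ := omega_nonempty (φ := φ) x
    have hpΛ : p ∈ Λ (i + 1) :=
      omega_subset_of_stable (hcpt (i + 1) hi).isClosed (hne (i + 1) hi) hxs hp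
    have hpA : p ∈ Λp := omega_subset_closed hΛp.1.isClosed horb hp
    exact trans_subset_forward hφ hΛp hpne (ht' (i + 1) hi) hpΛ hpA
  have stepB : ∀ i, i < n → Λ (i + 1) ⊆ Λm → Λ i ⊆ Λm := by
    intro i hi hsub
    obtain ⟨x, ⟨hxu, -⟩, hxs, -⟩ := hcycle i hi
    have horb : ∀ s, φ s x ∈ Λm :=
      absorb_reverse hφ hΛm hmne (stable_entries hxs (hcpt (i + 1) hi) (hne (i + 1) hi) hsub)
    obtain ⟨p, hp⟩ := alpha_nonempty (φ := φ) x
    have hpΛ : p ∈ Λ i :=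
      alpha_subset_of_unstable (hcpt i hi.le).isClosed (hne i hi.le) hxu hp
    have hpA : p ∈ Λm := alpha_subset_closed hΛm.1.isClosed horb hp
    exact trans_subset_reverse hφ hΛm hmne (ht' i hi.le) hpΛ hpA
  have B : ∀ j k, k + j ≤ n → Λ (k + j) ⊆ Λm → Λ k ⊆ Λm := by
    intro j
    induction j with
    | zero => intro k _ h; exact h
    | succ j ih =>
      intro k hk h
      exact ih k (by omega) (stepB (k + j) (by omega) h)
  have G : ∀ k, k ≤ n → Λ k ⊆ Λm := by
    intro k hk
    refine B (n - k) k (by omega) ?_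
    rw [show k + (n - k) = n from by omega, hper]
    exact hΛ0m
  obtain ⟨x, ⟨hxu, hxnot⟩, hxs, -⟩ := hcycle 0 h0
  have hxp : x ∈ Λp := by
    have := absorb_forward hφ hΛp hpne
      (unstable_entries hxu (hcpt 0 h0.le) (hne 0 h0.le) hΛ0p) 0
    rwa [hφ.2.1 x] at this
  have hxm : x ∈ Λm := by
    have := absorb_reverse hφ hΛm hmne
      (stable_entries hxs (hcpt 1 h0) (hne 1 h0) (G 1 h0)) 0
    rwa [hφ.2.1 x] at this
  exact hxnot (by rw [hΛ0]; exact ⟨hxp, hxm⟩)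
end

section
/- If Λ is a neutral set for a flow φ, then for every neighborhood U of Λ there exists a neighborhood V ⊆ U of Λ such that Ω(φ) ∩ V ⊆ ⋂_{t ∈ ℝ} φ(t, U), where Ω(φ) is the nonwandering set. -/
open Filter Topology Metric Set

variable {M : Type*} [MetricSpace M]

theorem nonwandering_localization_of_neutral [CompactSpace M] (φ : ℝ → M → M)
    (hφ : IsFlow φ) (Λ : Set M) (hΛ : IsNeutralSet φ Λ) :
    ∀ U : Set M, IsOpen U → Λ ⊆ U →
      ∃ V : Set M, IsOpen V ∧ Λ ⊆ V ∧ V ⊆ U ∧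
        NonwanderingSet φ ∩ V ⊆ ⋂ t : ℝ, φ t '' U := by
  obtain ⟨hcont, hzero, hadd⟩ := hφ
  obtain ⟨hΛc, hΛinv, Λp, Λm, ⟨hΛpc, hstabP⟩, ⟨hΛmc, hstabQ⟩, hΛeq⟩ := hΛ
  have hφcont : ∀ a : ℝ, Continuous (φ a) := fun a =>
    hcont.comp (continuous_const.prodMk continuous_id)
  intro U hU hΛU
  by_cases hpne : Λp.Nonempty
  swap
  · refine ⟨∅, isOpen_empty, ?_, empty_subset _, by simp⟩
    rw [hΛeq, Set.not_nonempty_iff_eq_empty.mp hpne]; simp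
  by_cases hmne : Λm.Nonempty
  swap
  · refine ⟨∅, isOpen_empty, ?_, empty_subset _, by simp⟩
    rw [hΛeq, Set.not_nonempty_iff_eq_empty.mp hmne]; simp
  -- choose ε
  have hsep : ∃ ε > (0:ℝ), ∀ x ∈ Uᶜ, 3 * ε ≤ infDist x Λp + infDist x Λm := by
    rcases eq_empty_or_nonempty Uᶜ with hKe | hKne
    · exact ⟨1, one_pos, fun x hx => by rw [hKe] at hx; exact hx.elim⟩
    · have hKc : IsCompact Uᶜ := hU.isClosed_compl.isCompact
      have hfc : Continuous fun x => infDist x Λp + infDist x Λm :=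
        (continuous_infDist_pt Λp).add (continuous_infDist_pt Λm)
      obtain ⟨x₀, hx₀K, hmin⟩ := hKc.exists_isMinOn hKne hfc.continuousOn
      have hpos : 0 < infDist x₀ Λp + infDist x₀ Λm := by
        rcases lt_or_eq_of_le (add_nonneg infDist_nonneg infDist_nonneg :
            (0:ℝ) ≤ infDist x₀ Λp + infDist x₀ Λm) with h | h
        · exact h
        · exfalso
          have h1 : infDist x₀ Λp = 0 := le_antisymm (by nlinarith [infDist_nonneg (x := x₀) (s := Λm)]) infDist_nonneg
          have h2 : infDist x₀ Λm = 0 := le_antisymm (by nlinarith [infDist_nonneg (x := x₀) (s := Λp)]) infDist_nonneg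
          have hx1 : x₀ ∈ Λp := (hΛpc.isClosed.mem_iff_infDist_zero hpne).mpr h1
          have hx2 : x₀ ∈ Λm := (hΛmc.isClosed.mem_iff_infDist_zero hmne).mpr h2
          exact hx₀K (hΛU (hΛeq ▸ ⟨hx1, hx2⟩))
      refine ⟨(infDist x₀ Λp + infDist x₀ Λm) / 3, by linarith, fun x hx => ?_⟩
      have := isMinOn_iff.mp hmin x hx; linarith
  obtain ⟨ε, hε, hsep⟩ := hsep
  set P := thickening ε Λp with hPdef
  set Q := thickening ε Λm with hQdef
  have hclP : closure P ⊆ {x | infDist x Λp ≤ ε} := by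
    apply closure_minimal
    · intro x hx
      exact le_of_lt ((mem_thickening_iff_infDist_lt hpne).mp hx)
    · exact isClosed_le (continuous_infDist_pt Λp) continuous_const
  have hclQ : closure Q ⊆ {x | infDist x Λm ≤ ε} := by
    apply closure_minimal
    · intro x hx
      exact le_of_lt ((mem_thickening_iff_infDist_lt hmne).mp hx)
    · exact isClosed_le (continuous_infDist_pt Λm) continuous_const
  have hPQU : closure P ∩ closure Q ⊆ U := by
    intro x ⟨hxP, hxQ⟩
    by_contra hxU
    have := hsep x hxU
    have h1 := hclP hxP
    have h2 := hclQ hxQ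
    simp only [mem_setOf_eq] at h1 h2
    linarith
  obtain ⟨P', hP'open, hΛpP', hP'⟩ :=
    hstabP P isOpen_thickening (self_subset_thickening hε Λp)
  obtain ⟨Q', hQ'open, hΛmQ', hQ'⟩ :=
    hstabQ Q isOpen_thickening (self_subset_thickening hε Λm)
  refine ⟨P' ∩ Q' ∩ U, (hP'open.inter hQ'open).inter hU, ?_, inter_subset_right, ?_⟩
  · intro x hx
    rw [hΛeq] at hx
    exact ⟨⟨hΛpP' hx.1, hΛmQ' hx.2⟩, hΛU (hΛeq ▸ hx)⟩
  · rintro p ⟨hpΩ, hpV⟩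
    have hkey : ∀ s : ℝ, φ s p ∈ U := by
      intro s
      apply hPQU
      rcases le_or_gt 0 s with hs | hs
      · constructor
        · exact subset_closure (hP' s hs ⟨p, hpV.1.1, rfl⟩)
        · rw [_root_.mem_closure_iff]
          intro N hNopen hNmem
          set W := (P' ∩ Q' ∩ U) ∩ (φ s) ⁻¹' N with hWdef
          have hWopen : IsOpen W :=
            ((hP'open.inter hQ'open).inter hU).inter (hNopen.preimage (hφcont s))
          have hpW : p ∈ W := ⟨hpV, hNmem⟩
          obtain ⟨t', ht', z, hz1, hz2⟩ := hpΩ W hWopen hpW (s + 1) (by linarith)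
          obtain ⟨y, hyW, hyz⟩ := hz1
          refine ⟨φ s y, hyW.2, ?_⟩
          have key : φ s y = ReverseFlow φ (t' - s) z := by
            rw [ReverseFlow, ← hyz, ← hadd]
            ring_nf
          rw [key]
          exact hQ' (t' - s) (by linarith) ⟨z, hz2.1.1.2, rfl⟩
      · constructor
        · rw [_root_.mem_closure_iff]
          intro N hNopen hNmem
          set W := (P' ∩ Q' ∩ U) ∩ (φ s) ⁻¹' N with hWdef
          have hWopen : IsOpen W :=
            ((hP'open.inter hQ'open).inter hU).inter (hNopen.preimage (hφcont s))
          have hpW : p ∈ W := ⟨hpV, hNmem⟩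
          obtain ⟨t', ht', z, hz1, hz2⟩ := hpΩ W hWopen hpW (-s) (by linarith)
          obtain ⟨y, hyW, hyz⟩ := hz1
          refine ⟨φ s z, hz2.2, ?_⟩
          have key : φ s z = φ (s + t') y := by rw [← hyz, ← hadd]
          rw [key]
          exact hP' (s + t') (by linarith) ⟨y, hyW.1.1.1, rfl⟩
        · apply subset_closure
          have : φ s p = ReverseFlow φ (-s) p := by rw [ReverseFlow, neg_neg]
          rw [this]
          exact hQ' (-s) (by linarith) ⟨p, hpV.1.2, rfl⟩
    rw [mem_iInter]
    intro t
    refine ⟨φ (-t) p, hkey (-t), ?_⟩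
    rw [← hadd, add_neg_cancel, hzero]
end

section
/- Localization property of neutral sets: if Λ is a neutral set of a flow φ, then for every open neighborhood U' of Λ there is an open neighborhood V ⊆ U' of Λ such that whenever t ≥ 0, p ∈ V, and φ(t, p) ∈ V, one has φ(s, p) ∈ U' for all s ∈ [0, t]. -/
open Filter Topology Metric Set

variable {M : Type*} [MetricSpace M]

theorem neutral_localization [CompactSpace M] (φ : ℝ → M → M) (hφ : IsFlow φ)
    (Λ : Set M) (hΛ : IsNeutralSet φ Λ) :
    ∀ U' : Set M, IsOpen U' → Λ ⊆ U' →
      ∃ V : Set M, IsOpen V ∧ Λ ⊆ V ∧ V ⊆ U' ∧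
        ∀ t : ℝ, 0 ≤ t → ∀ p ∈ V, φ t p ∈ V →
          ∀ s : ℝ, 0 ≤ s → s ≤ t → φ s p ∈ U' := by
  intro U' hU'o hΛU'
  obtain ⟨hΛc, hinv, Λp, Λm, ⟨hpc, hps⟩, ⟨hmc, hms⟩, heq⟩ := hΛ
  -- separate the compact sets Λp \ U' and Λm \ U'
  have hK1 : IsCompact (Λp \ U') := hpc.diff hU'o
  have hK2 : IsCompact (Λm \ U') := hmc.diff hU'o
  have hdisj : Disjoint (Λp \ U') (Λm \ U') := by
    rw [Set.disjoint_iff]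
    rintro x ⟨⟨hxp, hx1⟩, hxm, -⟩
    exact hx1 (hΛU' (heq ▸ ⟨hxp, hxm⟩))
  obtain ⟨O1, O2, hO1, hO2, hKO1, hKO2, hO12⟩ :=
    SeparatedNhds.of_isCompact_isCompact hK1 hK2 hdisj
  obtain ⟨Vp, hVpo, hpVp, hVp⟩ := hps (U' ∪ O1) (hU'o.union hO1)
    (fun x hx => (em (x ∈ U')).imp id fun h => hKO1 ⟨hx, h⟩)
  obtain ⟨Vm, hVmo, hmVm, hVm⟩ := hms (U' ∪ O2) (hU'o.union hO2)
    (fun x hx => (em (x ∈ U')).imp id fun h => hKO2 ⟨hx, h⟩)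
  refine ⟨Vp ∩ Vm ∩ U', (hVpo.inter hVmo).inter hU'o, ?_, Set.inter_subset_right, ?_⟩
  · intro x hx
    rw [heq] at hx
    exact ⟨⟨hpVp hx.1, hmVm hx.2⟩, hΛU' (heq ▸ hx)⟩
  · rintro t ht p ⟨⟨hpp, hpm⟩, -⟩ hpt s hs hst
    have h1 : φ s p ∈ U' ∪ O1 := hVp s hs ⟨p, hpp, rfl⟩
    have h2 : φ s p ∈ U' ∪ O2 := by
      have := hVm (t - s) (by linarith) ⟨φ t p, hpt.1.2, rfl⟩
      rwa [show ReverseFlow φ (t - s) (φ t p) = φ s p by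
        rw [ReverseFlow, ← hφ.2.2]; ring_nf] at this
    rcases h1 with h1 | h1
    · exact h1
    rcases h2 with h2 | h2
    · exact h2
    · exact absurd (Set.disjoint_iff.mp hO12 ⟨h1, h2⟩) (Set.notMem_empty _)
end

section
/- If Λ is a neutral set of a flow φ and (Λ_n) is a sequence of transitive sets of φ with dist(Λ_n, Λ) → 0 (infimum distance between the sets), then Λ_n accumulates on Λ: for every open neighborhood U of Λ there is n₀ such that Λ_n ⊆ U for all n ≥ n₀. -/
open Filter Topology Metric Set

variable {M : Type*} [MetricSpace M]

theorem transitive_sets_accumulate_on_neutral [CompactSpace M] (φ : ℝ → M → M)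
    (hφ : IsFlow φ) (Λ : Set M) (hΛ : IsNeutralSet φ Λ)
    (Λs : ℕ → Set M) (htrans : ∀ n, IsTransitiveSet φ (Λs n))
    (hdist : ∀ ε : ℝ, 0 < ε → ∃ N : ℕ, ∀ n ≥ N,
      ∃ a ∈ Λs n, ∃ b ∈ Λ, dist a b < ε) :
    ∀ U : Set M, IsOpen U → Λ ⊆ U → ∃ n₀ : ℕ, ∀ n ≥ n₀, Λs n ⊆ U := by
  obtain ⟨hcont, h0, hadd⟩ := hφ
  obtain ⟨hΛc, hΛinv, Λp, Λm, ⟨hΛpC, hΛpS⟩, ⟨hΛmC, hΛmS⟩, hEq⟩ := hΛ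
  intro U hU hΛU
  -- shrink U to U' with closure U' ⊆ U
  obtain ⟨U', hU'o, hΛU', hclU'⟩ := normal_exists_closure_subset hΛc.isClosed hU hΛU
  -- separate Λp \ U' and Λm \ U'
  have hdisj : Disjoint (Λp \ U') (Λm \ U') := by
    rw [Set.disjoint_left]
    rintro z ⟨hzp, hzU⟩ ⟨hzm, -⟩
    exact hzU (hΛU' (hEq ▸ ⟨hzp, hzm⟩))
  obtain ⟨P, Q, hPo, hQo, hPs, hQs, hPQ⟩ :=
    SeparatedNhds.of_isCompact_isCompact (hΛpC.diff hU'o) (hΛmC.diff hU'o) hdisj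
  set A := U' ∪ P with hA
  set B := U' ∪ Q with hB
  have hAB : A ∩ B ⊆ U' := by
    rintro z ⟨hzA, hzB⟩
    rcases hzA with h | h
    · exact h
    rcases hzB with h' | h'
    · exact h'
    exact absurd (Set.disjoint_left.1 hPQ h h') (by simp)
  have hΛpA : Λp ⊆ A := fun z hz => by
    by_cases hzU : z ∈ U'
    · exact Or.inl hzU
    · exact Or.inr (hPs ⟨hz, hzU⟩)
  have hΛmB : Λm ⊆ B := fun z hz => by
    by_cases hzU : z ∈ U'
    · exact Or.inl hzU
    · exact Or.inr (hQs ⟨hz, hzU⟩)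
  obtain ⟨Vp, hVpo, hΛpVp, hVp⟩ := hΛpS A (hU'o.union hPo) hΛpA
  obtain ⟨Vm, hVmo, hΛmVm, hVm⟩ := hΛmS B (hU'o.union hQo) hΛmB
  set V := Vp ∩ Vm with hV
  have hVo : IsOpen V := hVpo.inter hVmo
  have hΛV : Λ ⊆ V := by
    rw [hEq]; exact Set.inter_subset_inter hΛpVp hΛmVm
  obtain ⟨ε, hε, hthick⟩ := hΛc.exists_thickening_subset_open hVo hΛV
  obtain ⟨N, hN⟩ := hdist ε hε
  refine ⟨N, fun n hn y hy => ?_⟩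
  obtain ⟨a, haΛn, b, hbΛ, hab⟩ := hN n hn
  have haV : a ∈ V := hthick (mem_thickening_iff.2 ⟨b, hbΛ, hab⟩)
  obtain ⟨-, -, x, -, hω⟩ := htrans n
  rw [← hω] at haΛn hy
  obtain ⟨u, hu, huc⟩ := haΛn
  obtain ⟨t, ht, htc⟩ := hy
  have hevV : ∀ᶠ k in atTop, φ (u k) x ∈ V := huc.eventually (hVo.mem_nhds haV)
  obtain ⟨K, hK⟩ := hevV.exists
  -- show the orbit points approximating y are in U'
  have hU'mem : ∀ᶠ j in atTop, φ (t j) x ∈ U' := by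
    filter_upwards [ht.eventually_ge_atTop (u K)] with j hj
    apply hAB
    constructor
    · -- forward stability: φ (t j) x ∈ A
      have heq : φ (t j) x = φ (t j - u K) (φ (u K) x) := by
        rw [← hadd]; ring_nf
      rw [heq]
      exact hVp (t j - u K) (by linarith) ⟨φ (u K) x, hK.1, rfl⟩
    · -- backward stability: φ (t j) x ∈ B
      obtain ⟨k, hk1, hk2⟩ := ((hu.eventually_ge_atTop (t j)).and hevV).exists
      have heq : φ (t j) x = ReverseFlow φ (u k - t j) (φ (u k) x) := by
        unfold ReverseFlow
        rw [← hadd]; ring_nf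
      rw [heq]
      exact hVm (u k - t j) (by linarith) ⟨φ (u k) x, hk2.2, rfl⟩
  exact hclU' (mem_closure_of_tendsto htc hU'mem)
end

section
/- Every saturated Ω-isolated compact invariant set of a flow on a compact metric space is isolated: if Λ is compact invariant, Ω(φ) \ Λ is closed, and W^s(Λ) ∩ W^u(Λ) = Λ, then there is a compact neighborhood U of Λ with ⋂_{t∈ℝ} φ(t, U) = Λ. -/
open Filter Topology Metric Set

variable {M : Type*} [MetricSpace M]

/-!
If `Ω(φ) \ Λ` is closed, some closed `δ`-neighbourhood `U` of `Λ` meets `Ω(φ)` only in `Λ`.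
A point whose whole orbit stays in `U` has its ω- and α-limit sets in `U ∩ Ω(φ) ⊆ Λ`, so by
compactness of `M` it lies in `W^s(Λ) ∩ W^u(Λ)`, which is `Λ` by saturation.
-/

theorem tendsto_infDist_of_forall_seq_limit_mem [CompactSpace M] {α : Type*} {γ : α → M}
    {l : Filter α} [l.IsCountablyGenerated] {Λ : Set M}
    (h : ∀ (u : ℕ → α) (y : M), Tendsto u atTop l → Tendsto (γ ∘ u) atTop (𝓝 y) → y ∈ Λ) :
    Tendsto (fun a => infDist (γ a) Λ) l (𝓝 0) := by
  refine tendsto_of_subseq_tendsto fun ns hns => ?_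
  obtain ⟨y, -, ms, hms, hy⟩ := isCompact_univ.tendsto_subseq fun n => mem_univ (γ (ns n))
  have hyΛ : y ∈ Λ := h _ y (hns.comp hms.tendsto_atTop) hy
  refine ⟨ms, ?_⟩
  simpa [infDist_zero_of_mem hyΛ, Function.comp_def] using
    ((continuous_infDist_pt Λ).tendsto y).comp hy

section FlowAlgebra

variable {X : Type*} {φ : ℝ → X → X}

theorem image_inter_nonempty_of_orbit_mem (hadd : ∀ s t x, φ (s + t) x = φ s (φ t x))
    {W : Set X} {x : X} {a b : ℝ} (ha : φ a x ∈ W) (hb : φ b x ∈ W) :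
    (φ (b - a) '' W ∩ W).Nonempty :=
  ⟨φ b x, ⟨φ a x, ha, by rw [← hadd, sub_add_cancel]⟩, hb⟩

theorem mem_of_mem_iInter_image (hadd : ∀ s t x, φ (s + t) x = φ s (φ t x))
    (h0 : ∀ x, φ 0 x = x) {U : Set X} {x : X} (hx : x ∈ ⋂ t, φ t '' U) (s : ℝ) :
    φ s x ∈ U := by
  obtain ⟨y, hyU, rfl⟩ := mem_iInter.mp hx (-s)
  rwa [← hadd, add_neg_cancel, h0]

end FlowAlgebra

section LimitSets

variable {φ : ℝ → M → M}

theorem mem_stableSet_of_omegaSet_subset [CompactSpace M] {Λ : Set M} {x : M}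
    (h : OmegaSet φ x ⊆ Λ) : x ∈ StableSet φ Λ :=
  tendsto_infDist_of_forall_seq_limit_mem fun u _ hu hy => h ⟨u, hu, hy⟩

theorem mem_unstableSet_of_alphaSet_subset [CompactSpace M] {Λ : Set M} {x : M}
    (h : AlphaSet φ x ⊆ Λ) : x ∈ UnstableSet φ Λ :=
  tendsto_infDist_of_forall_seq_limit_mem fun u _ hu hy => h ⟨u, hu, hy⟩

theorem omegaSet_subset_of_forall_mem {U : Set M} (hU : IsClosed U) {x : M}
    (horb : ∀ t, φ t x ∈ U) : OmegaSet φ x ⊆ U := by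
  rintro y ⟨u, -, hy⟩
  exact hU.mem_of_tendsto hy (Eventually.of_forall fun n => horb (u n))

theorem alphaSet_subset_of_forall_mem {U : Set M} (hU : IsClosed U) {x : M}
    (horb : ∀ t, φ t x ∈ U) : AlphaSet φ x ⊆ U := by
  rintro y ⟨u, -, hy⟩
  exact hU.mem_of_tendsto hy (Eventually.of_forall fun n => horb (u n))

theorem omegaSet_subset_nonwandering (hadd : ∀ s t x, φ (s + t) x = φ s (φ t x))
    (x : M) : OmegaSet φ x ⊆ NonwanderingSet φ := by
  rintro y ⟨u, hu, hy⟩ W hW hyW T -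
  have hev : ∀ᶠ n in atTop, φ (u n) x ∈ W := hy (hW.mem_nhds hyW)
  obtain ⟨n, hn⟩ := hev.exists
  obtain ⟨m, hm, hmW⟩ := ((hu.eventually_gt_atTop (u n + T)).and hev).exists
  exact ⟨u m - u n, by linarith, image_inter_nonempty_of_orbit_mem hadd hn hmW⟩

theorem alphaSet_subset_nonwandering (hadd : ∀ s t x, φ (s + t) x = φ s (φ t x))
    (x : M) : AlphaSet φ x ⊆ NonwanderingSet φ := by
  rintro y ⟨u, hu, hy⟩ W hW hyW T -
  have hev : ∀ᶠ n in atTop, φ (u n) x ∈ W := hy (hW.mem_nhds hyW)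
  obtain ⟨n, hn⟩ := hev.exists
  obtain ⟨m, hm, hmW⟩ := ((hu.eventually_lt_atBot (u n - T)).and hev).exists
  exact ⟨u n - u m, by linarith, image_inter_nonempty_of_orbit_mem hadd hmW hn⟩

theorem mem_stableSet_inter_unstableSet_of_orbit_subset [CompactSpace M]
    (hadd : ∀ s t x, φ (s + t) x = φ s (φ t x)) {Λ U : Set M} (hU : IsClosed U)
    (hUΛ : U ∩ NonwanderingSet φ ⊆ Λ) {x : M} (horb : ∀ t, φ t x ∈ U) :
    x ∈ StableSet φ Λ ∩ UnstableSet φ Λ :=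
  ⟨mem_stableSet_of_omegaSet_subset fun _ hy =>
      hUΛ ⟨omegaSet_subset_of_forall_mem hU horb hy, omegaSet_subset_nonwandering hadd x hy⟩,
    mem_unstableSet_of_alphaSet_subset fun _ hy =>
      hUΛ ⟨alphaSet_subset_of_forall_mem hU horb hy, alphaSet_subset_nonwandering hadd x hy⟩⟩

end LimitSets

theorem saturated_omega_isolated_is_isolated [CompactSpace M] (φ : ℝ → M → M)
    (hφ : IsFlow φ) (Λ : Set M) (hcomp : IsCompact Λ) (hinv : IsInvariantSet φ Λ)
    (hΩ : IsOmegaIsolatedSet φ Λ)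
    (hsat : StableSet φ Λ ∩ UnstableSet φ Λ = Λ) :
    IsIsolatedSet φ Λ := by
  obtain ⟨-, h0, hadd⟩ := hφ
  obtain ⟨δ, hδ, hUΩ⟩ := hcomp.exists_cthickening_subset_open hΩ.isOpen_compl
    fun x hx hxΩ => hxΩ.2 hx
  have hUΛ : cthickening δ Λ ∩ NonwanderingSet φ ⊆ Λ := fun y hy =>
    by_contra fun hyΛ => hUΩ hy.1 ⟨hy.2, hyΛ⟩
  refine ⟨cthickening δ Λ, isClosed_cthickening.isCompact,
    (self_subset_thickening hδ Λ).trans (thickening_subset_interior_cthickening δ Λ),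
    Subset.antisymm (fun x hx => ?_) fun x hx => mem_iInter.mpr fun t => ?_⟩
  · rw [← hsat]
    exact mem_stableSet_inter_unstableSet_of_orbit_subset hadd isClosed_cthickening hUΛ
      (mem_of_mem_iInter_image hadd h0 hx)
  · exact image_mono (self_subset_cthickening Λ) (by rwa [hinv t])
end

section
/- Let 𝓕 be the collection of all isolated transitive neutral sets of a flow φ on a compact metric space. A subcollection 𝓕' of 𝓕 is finite if and only if the union ⋃_{Λ ∈ 𝓕'} Λ is closed. -/
open Filter Topology Metric Set

variable {M : Type*} [MetricSpace M]

/-! A neutral set `Λ = Λ⁺ ∩ Λ⁻` traps ω-limit sets: once a forward orbit returns arbitrarily late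
to a small neighbourhood of `Λ`, Lyapunov stability of `Λ⁺` keeps it near `Λ⁺` from some time on,
and Lyapunov stability of `Λ⁻` for the reversed flow keeps it near `Λ⁻` at all earlier times, so its
ω-limit set lies near `Λ`. Hence a transitive set meeting a neutral set lies inside it, and an
isolated transitive neutral set has a neighbourhood that no other transitive neutral set meets.
If `⋃₀ 𝓕'` is closed it is compact, finitely many of these neighbourhoods cover it, and each of
them meets only one member of `𝓕'`. -/

theorem exists_isOpen_superset_closure_inter_subset {X : Type*} [TopologicalSpace X]
    [NormalSpace X] {P Q W : Set X} (hP : IsClosed P) (hQ : IsClosed Q) (hW : IsOpen W)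
    (hPQ : P ∩ Q ⊆ W) :
    ∃ A B : Set X, IsOpen A ∧ IsOpen B ∧ P ⊆ A ∧ Q ⊆ B ∧ closure A ∩ closure B ⊆ closure W := by
  obtain ⟨U, hU, hPU, hUQ⟩ := normal_exists_closure_subset (hP.sdiff hW)
    (hQ.sdiff hW).isOpen_compl fun x hx hxQ => hx.2 (hPQ ⟨hx.1, hxQ.1⟩)
  obtain ⟨U', hU', hQU', hU'U⟩ := normal_exists_closure_subset (hQ.sdiff hW)
    isClosed_closure.isOpen_compl fun x hx hxU => hUQ hxU hx
  refine ⟨W ∪ U, W ∪ U', hW.union hU, hW.union hU', sdiff_subset_iff.1 hPU,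
    sdiff_subset_iff.1 hQU', ?_⟩
  rw [closure_union, closure_union]
  rintro x ⟨hxW | hxU, hxW' | hxU'⟩
  exacts [hxW, hxW, hxW', absurd hxU (hU'U hxU')]

section

variable {φ : ℝ → M → M}

theorem frequently_mem_of_mem_omegaSet {x y : M} {V : Set M} (hV : IsOpen V)
    (hy : y ∈ OmegaSet φ x) (hyV : y ∈ V) : ∃ᶠ t in atTop, φ t x ∈ V := by
  obtain ⟨u, hu, hux⟩ := hy
  exact hu.frequently (hux.eventually (hV.mem_nhds hyV)).frequently

theorem omegaSet_subset_closure {x : M} {A : Set M} (h : ∀ᶠ t in atTop, φ t x ∈ A) :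
    OmegaSet φ x ⊆ closure A := by
  rintro y ⟨u, hu, hux⟩
  exact mem_closure_of_tendsto hux (hu.eventually h)

theorem LyapStable.exists_forward_trap (hφ : IsFlow φ) {P A : Set M} (hP : LyapStable φ P)
    (hA : IsOpen A) (hPA : P ⊆ A) :
    ∃ V : Set M, IsOpen V ∧ P ⊆ V ∧ ∀ x s t, s ≤ t → φ s x ∈ V → φ t x ∈ A := by
  obtain ⟨V, hV, hPV, hVA⟩ := hP.2 A hA hPA
  refine ⟨V, hV, hPV, fun x s t hst hs => ?_⟩
  have hshift : φ t x = φ (t - s) (φ s x) := by rw [← hφ.2.2, sub_add_cancel]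
  exact hshift ▸ hVA (t - s) (sub_nonneg.2 hst) ⟨φ s x, hs, rfl⟩

theorem LyapStable.exists_backward_trap (hφ : IsFlow φ) {Q B : Set M}
    (hQ : LyapStable (ReverseFlow φ) Q) (hB : IsOpen B) (hQB : Q ⊆ B) :
    ∃ V : Set M, IsOpen V ∧ Q ⊆ V ∧ ∀ x s t, t ≤ s → φ s x ∈ V → φ t x ∈ B := by
  obtain ⟨V, hV, hQV, hVB⟩ := hQ.2 B hB hQB
  refine ⟨V, hV, hQV, fun x s t hts hs => ?_⟩
  have hshift : φ t x = ReverseFlow φ (s - t) (φ s x) := by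
    rw [ReverseFlow, ← hφ.2.2, neg_sub, sub_add_cancel]
  exact hshift ▸ hVB (s - t) (sub_nonneg.2 hts) ⟨φ s x, hs, rfl⟩

theorem IsNeutralSet.exists_omegaSet_trap (hφ : IsFlow φ) {Λ W : Set M}
    (hΛ : IsNeutralSet φ Λ) (hW : IsOpen W) (hΛW : Λ ⊆ W) :
    ∃ V : Set M, IsOpen V ∧ Λ ⊆ V ∧
      ∀ x, (∃ᶠ t in atTop, φ t x ∈ V) → OmegaSet φ x ⊆ closure W := by
  obtain ⟨-, -, P, Q, hP, hQ, rfl⟩ := hΛ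
  obtain ⟨A, B, hA, hB, hPA, hQB, hAB⟩ :=
    exists_isOpen_superset_closure_inter_subset hP.1.isClosed hQ.1.isClosed hW hΛW
  obtain ⟨Vp, hVp, hPVp, hforward⟩ := hP.exists_forward_trap hφ hA hPA
  obtain ⟨Vm, hVm, hQVm, hbackward⟩ := hQ.exists_backward_trap hφ hB hQB
  refine ⟨Vp ∩ Vm, hVp.inter hVm, inter_subset_inter hPVp hQVm, fun x hx => ?_⟩
  obtain ⟨t₀, ht₀⟩ := hx.exists
  have hAB_eventually : ∀ᶠ t in atTop, φ t x ∈ A ∩ B :=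
    (eventually_ge_atTop t₀).mono fun t ht => by
      obtain ⟨s, hts, hs⟩ := frequently_atTop.1 hx t
      exact ⟨hforward x t₀ t ht ht₀.1, hbackward x s t hts hs.2⟩
  exact (omegaSet_subset_closure hAB_eventually).trans
    ((closure_inter_subset_inter_closure A B).trans hAB)

theorem IsNeutralSet.omegaSet_subset (hφ : IsFlow φ) {Λ : Set M} {x : M}
    (hΛ : IsNeutralSet φ Λ) (h : (OmegaSet φ x ∩ Λ).Nonempty) : OmegaSet φ x ⊆ Λ := by
  obtain ⟨y, hyω, hyΛ⟩ := h
  rw [← hΛ.1.isClosed.closure_eq, closure_eq_iInter_cthickening]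
  refine subset_iInter₂ fun ε hε => ?_
  obtain ⟨V, hV, hΛV, htrap⟩ :=
    hΛ.exists_omegaSet_trap hφ isOpen_thickening (self_subset_thickening hε Λ)
  exact (htrap x (frequently_mem_of_mem_omegaSet hV hyω (hΛV hyΛ))).trans
    (closure_thickening_subset_cthickening ε Λ)

theorem IsTransitiveSet.subset_of_isNeutralSet (hφ : IsFlow φ) {Γ Λ : Set M}
    (hΓ : IsTransitiveSet φ Γ) (hΛ : IsNeutralSet φ Λ) (h : (Γ ∩ Λ).Nonempty) : Γ ⊆ Λ := by
  obtain ⟨-, -, x, -, rfl⟩ := hΓ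
  exact hΛ.omegaSet_subset hφ h

theorem IsIsolatedSet.exists_nhds_transitive_subset (hφ : IsFlow φ) {Λ : Set M}
    (hiso : IsIsolatedSet φ Λ) (hΛ : IsNeutralSet φ Λ) :
    ∃ V : Set M, IsOpen V ∧ Λ ⊆ V ∧
      ∀ Γ, IsTransitiveSet φ Γ → (Γ ∩ V).Nonempty → Γ ⊆ Λ := by
  obtain ⟨U, hU, hΛU, hmax⟩ := hiso
  obtain ⟨V, hV, hΛV, htrap⟩ := hΛ.exists_omegaSet_trap hφ isOpen_interior hΛU
  refine ⟨V, hV, hΛV, ?_⟩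
  rintro Γ ⟨-, hinv, x, -, rfl⟩ ⟨y, hyω, hyV⟩
  have hωU : OmegaSet φ x ⊆ U := (htrap x (frequently_mem_of_mem_omegaSet hV hyω hyV)).trans
    (closure_minimal interior_subset hU.isClosed)
  rw [← hmax]
  exact subset_iInter fun t => (hinv t).symm.subset.trans (image_mono hωU)

theorem IsIsolatedSet.exists_nhds_transitive_neutral_eq (hφ : IsFlow φ) {Λ : Set M}
    (hiso : IsIsolatedSet φ Λ) (hΛt : IsTransitiveSet φ Λ) (hΛn : IsNeutralSet φ Λ) :
    ∃ V : Set M, IsOpen V ∧ Λ ⊆ V ∧ ∀ Γ, Γ.Nonempty → IsTransitiveSet φ Γ →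
      IsNeutralSet φ Γ → (Γ ∩ V).Nonempty → Γ = Λ := by
  obtain ⟨V, hV, hΛV, hsub⟩ := hiso.exists_nhds_transitive_subset hφ hΛn
  refine ⟨V, hV, hΛV, fun Γ hne hΓt hΓn hΓV => ?_⟩
  have hΓΛ : Γ ⊆ Λ := hsub Γ hΓt hΓV
  obtain ⟨x, hx⟩ := hne
  exact hΓΛ.antisymm (hΛt.subset_of_isNeutralSet hφ hΓn ⟨x, hΓΛ hx, hx⟩)

end

theorem finite_iff_union_closed [CompactSpace M] (φ : ℝ → M → M) (hφ : IsFlow φ)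
    (F' : Set (Set M))
    (hF : ∀ Λ ∈ F', Λ.Nonempty ∧ IsIsolatedSet φ Λ ∧ IsTransitiveSet φ Λ ∧
      IsNeutralSet φ Λ) :
    F'.Finite ↔ IsClosed (⋃₀ F') := by
  refine ⟨fun hfin => ?_, fun hclosed => ?_⟩
  · rw [sUnion_eq_biUnion]
    exact hfin.isClosed_biUnion fun Λ hΛ => (hF Λ hΛ).2.2.1.1.isClosed
  choose! V hV hΛV hVeq using fun Λ hΛ =>
    (hF Λ hΛ).2.1.exists_nhds_transitive_neutral_eq hφ (hF Λ hΛ).2.2.1 (hF Λ hΛ).2.2.2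
  obtain ⟨t, htF, htfin, hcover⟩ := hclosed.isCompact.elim_finite_subcover_image hV
    fun x ⟨Λ, hΛ, hx⟩ => mem_biUnion hΛ (hΛV Λ hΛ hx)
  refine htfin.subset fun Γ hΓ => ?_
  obtain ⟨⟨x, hx⟩, -, hΓt, hΓn⟩ := hF Γ hΓ
  obtain ⟨Λ, hΛt, hxV⟩ := mem_iUnion₂.1 (hcover ⟨Γ, hΓ, hx⟩)
  rwa [hVeq Λ (htF hΛt) Γ ⟨x, hx⟩ hΓt hΓn ⟨x, hx, hxV⟩]
end
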